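/- Orthant square-root trick for oriented structures: for all positive integers $n,N,t$ and $L\ge n$, $\mathbb{P}(|{}_L\eta_{1,t}^{[-n,n]^d,\mathbb{Z}^d\setminus[-n,n]^d}\cap[0,L)^d|\le N)^{2^d}\le \mathbb{P}(|{}_L\eta_{1,t}^{[-n,n]^d,\mathbb{Z}^d\setminus[-n,n]^d}|\le N2^d)$. -/

import Mathlib

open MeasureTheory ProbabilityTheory Filter
open scoped ENNReal

/-- Driving randomness for one time step of the competition model:
`o1` = openness of type-1 edges (prob. `p`), `o2` = openness of type-2 edges (prob. `q`),
`o3` = immigration of type-2 particles (prob. `α`). -/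
structure CompStep (d : ℕ) where
  o1 : (Fin d → ℤ) → (Fin d → ℤ) → Bool
  o2 : (Fin d → ℤ) → (Fin d → ℤ) → Bool
  o3 : (Fin d → ℤ) → Bool

instance {d : ℕ} : MeasurableSpace (CompStep d) :=
  MeasurableSpace.comap (fun c => (c.o1, c.o2, c.o3)) inferInstance

/-- `ℓ¹`-neighbours (including the site itself). -/
def nbr {d : ℕ} (x y : Fin d → ℤ) : Prop := (∑ i, |x i - y i|) ≤ 1

/-- The competition model: `(compEta d w A B n).1` is the set of type-1 sites (bacteria)
and `(compEta d w A B n).2` the set of type-2 sites (immune cells) at time `n`, started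
from 1's on `A` and 2's on `B`; each particle spreads along its open edges, type 2 wins
conflicts, and immigration then creates new 2's. -/
def compEta (d : ℕ) (w : ℕ → CompStep d) (A B : Set (Fin d → ℤ)) :
    ℕ → Set (Fin d → ℤ) × Set (Fin d → ℤ)
  | 0 => (A, B)
  | n + 1 =>
      let prev := compEta d w A B n
      let two : Set (Fin d → ℤ) :=
        {k | (w (n + 1)).o3 k = true ∨ ∃ i ∈ prev.2, nbr i k ∧ (w (n + 1)).o2 i k = true}
      ({k | k ∉ two ∧ ∃ i ∈ prev.1, nbr i k ∧ (w (n + 1)).o1 i k = true}, two)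

/-- The truncated competition model `_Lη`: all sites outside `(-L,L)^d` are forced to be
in state 2 at all times. -/
def compEtaTrunc (d : ℕ) (L : ℕ) (w : ℕ → CompStep d) (A B : Set (Fin d → ℤ)) :
    ℕ → Set (Fin d → ℤ) × Set (Fin d → ℤ)
  | 0 => (A \ {k | ∃ i, (L : ℤ) ≤ |k i|}, B ∪ {k | ∃ i, (L : ℤ) ≤ |k i|})
  | n + 1 =>
      let prev := compEtaTrunc d L w A B n
      let two : Set (Fin d → ℤ) :=
        {k | (w (n + 1)).o3 k = true ∨ ∃ i ∈ prev.2, nbr i k ∧ (w (n + 1)).o2 i k = true}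
          ∪ {k | ∃ i, (L : ℤ) ≤ |k i|}
      ({k | k ∉ two ∧ ∃ i ∈ prev.1, nbr i k ∧ (w (n + 1)).o1 i k = true}, two)

/-- Index type for the full family of driving Bernoulli variables. -/
abbrev CompIdx (d : ℕ) :=
  (ℕ × (Fin d → ℤ) × (Fin d → ℤ)) ⊕ (ℕ × (Fin d → ℤ) × (Fin d → ℤ)) ⊕ (ℕ × (Fin d → ℤ))

/-- The family of all driving Bernoulli variables of the competition model. -/
def compVar {Ω : Type*} {d : ℕ} (env : Ω → ℕ → CompStep d) :
    CompIdx d → Ω → Bool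
  | Sum.inl (n, x, y) => fun ω => (env ω n).o1 x y
  | Sum.inr (Sum.inl (n, x, y)) => fun ω => (env ω n).o2 x y
  | Sum.inr (Sum.inr (n, x)) => fun ω => (env ω n).o3 x

/-- The driving variables are independent Bernoulli variables with respective parameters
`p` (type-1 edges), `q` (type-2 edges) and `α` (immigration). -/
def CompLaw {Ω : Type*} [MeasurableSpace Ω] {d : ℕ} (μ : Measure Ω)
    (env : Ω → ℕ → CompStep d) (p q α : ℝ) : Prop :=
  iIndepFun (compVar env) μ ∧
    (∀ n x y, μ {ω | (env ω n).o1 x y = true} = ENNReal.ofReal p) ∧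
    (∀ n x y, μ {ω | (env ω n).o2 x y = true} = ENNReal.ofReal q) ∧
    (∀ n x, μ {ω | (env ω n).o3 x = true} = ENNReal.ofReal α)

/-!
The truncated process started from the cube is symmetric under the sign flips of the
coordinates, so the $2^d$ orthant counts have the same law. Storing the type-2 driving bits
negated, the type-1 set is increasing in every bit, so each event "at most `N` particles in a
given orthant" is a decreasing event; it depends on finitely many bits because the truncated
process never looks outside `[-L, L]^d`. The Harris (FKG) inequality for independent bits bounds
the product of the probabilities of these events by the probability of their intersection, on
which the total count is at most `N * 2^d` since the orthants cover `(-L, L)^d`.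
-/

lemma IsLowerSet.antitone_indicator_one {α : Type*} [Preorder α] {A : Set α}
    (hA : IsLowerSet A) : Antitone (A.indicator (1 : α → ℝ)) := by
  intro a b hab
  by_cases hb : b ∈ A
  · simp [hb, hA hab hb]
  · simp only [Set.indicator_of_notMem hb]
    exact Set.indicator_nonneg (fun _ _ => zero_le_one) a

namespace MeasureTheory

section Harris

variable {α : Type*} [MeasurableSpace α] [MeasurableSingletonClass α] [Fintype α]

lemma sum_measureReal_singleton_mul_indicator (ν : Measure α) [IsFiniteMeasure ν] (A : Set α) :
    ∑ a, ν.real {a} * A.indicator 1 a = ν.real A := by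
  classical
  simp only [Set.indicator_apply, Pi.one_apply, mul_ite, mul_one, mul_zero]
  rw [Finset.sum_ite, Finset.sum_const_zero, add_zero, sum_measureReal_singleton]
  congr 1
  ext
  simp

variable [DistribLattice α]

/-- The Harris inequality: the FKG inequality on the order dual, for indicators of lower sets. -/
theorem measure_mul_measure_le_measure_inter_of_isLowerSet (ν : Measure α)
    [IsProbabilityMeasure ν] (hν : ∀ a b, ν {a} * ν {b} ≤ ν {a ⊓ b} * ν {a ⊔ b})
    {A B : Set α} (hA : IsLowerSet A) (hB : IsLowerSet B) :
    ν A * ν B ≤ ν (A ∩ B) := by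
  open OrderDual in
  have hνdual (a b : αᵒᵈ) : ν.real {ofDual a} * ν.real {ofDual b}
      ≤ ν.real {ofDual (a ⊓ b)} * ν.real {ofDual (a ⊔ b)} := by
    simp only [measureReal_def, ← ENNReal.toReal_mul]
    rw [mul_comm (ν {ofDual (a ⊓ b)})]
    exact ENNReal.toReal_mono (by finiteness) (hν _ _)
  have h := fkg (α := αᵒᵈ) (fun a => A.indicator 1 (ofDual a))
    (fun a => B.indicator 1 (ofDual a)) (fun a => ν.real {ofDual a})
    (fun _ => measureReal_nonneg) (fun _ => Set.indicator_nonneg (fun _ _ => zero_le_one) _)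
    (fun _ => Set.indicator_nonneg (fun _ _ => zero_le_one) _)
    hA.antitone_indicator_one.dual_left hB.antitone_indicator_one.dual_left hνdual
  have hsum (C : Set α) :
      ∑ a : αᵒᵈ, ν.real {ofDual a} * C.indicator 1 (ofDual a) = ν.real C :=
    sum_measureReal_singleton_mul_indicator ν C
  have htotal : ∑ a : αᵒᵈ, ν.real {ofDual a} = 1 := by simpa using hsum Set.univ
  simp only [← Pi.mul_apply (A.indicator 1), ← Set.inter_indicator_one, hsum, htotal,
    one_mul] at h
  rw [measureReal_def, measureReal_def, measureReal_def, ← ENNReal.toReal_mul] at h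
  exact (ENNReal.toReal_le_toReal (by finiteness) (by finiteness)).1 h

theorem prod_measure_le_measure_biInter_of_isLowerSet {κ : Type*} (ν : Measure α)
    [IsProbabilityMeasure ν] (hν : ∀ a b, ν {a} * ν {b} ≤ ν {a ⊓ b} * ν {a ⊔ b})
    (u : Finset κ) {A : κ → Set α} (hA : ∀ j, IsLowerSet (A j)) :
    ∏ j ∈ u, ν (A j) ≤ ν (⋂ j ∈ u, A j) := by
  classical
  induction u using Finset.induction_on with
  | empty => simp
  | insert j u hj ih =>
    rw [Finset.prod_insert hj, Finset.set_biInter_insert]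
    calc ν (A j) * ∏ i ∈ u, ν (A i) ≤ ν (A j) * ν (⋂ i ∈ u, A i) := by gcongr
      _ ≤ ν (A j ∩ ⋂ i ∈ u, A i) :=
        measure_mul_measure_le_measure_inter_of_isLowerSet ν hν (hA j)
          (isLowerSet_iInter₂ fun i _ => hA i)

end Harris

theorem Measure.pi_singleton_mul_pi_singleton {ι : Type*} [Fintype ι] {β : ι → Type*}
    [∀ i, LinearOrder (β i)] [∀ i, MeasurableSpace (β i)] [∀ i, MeasurableSingletonClass (β i)]
    (ν : ∀ i, Measure (β i)) [∀ i, SigmaFinite (ν i)] (a b : ∀ i, β i) :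
    Measure.pi ν {a} * Measure.pi ν {b} = Measure.pi ν {a ⊓ b} * Measure.pi ν {a ⊔ b} := by
  simp only [← Set.univ_pi_singleton, Measure.pi_pi, ← Finset.prod_mul_distrib]
  refine Finset.prod_congr rfl fun i _ => ?_
  rcases le_total (a i) (b i) with h | h
  · simp [h]
  · simp [h, mul_comm]

lemma Measure.ext_of_apply_true {ν ν' : Measure Bool} [IsProbabilityMeasure ν]
    [IsProbabilityMeasure ν'] (h : ν {true} = ν' {true}) : ν = ν' := by
  refine Measure.ext_iff_singleton.2 fun b => ?_
  cases b
  · change ν {!true} = ν' {!true}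
    rw [← Bool.compl_singleton, prob_compl_eq_one_sub (measurableSet_singleton _),
      prob_compl_eq_one_sub (measurableSet_singleton _), h]
  · exact h

end MeasureTheory

section Restrict

variable {ι : Type*} {β : ι → Type*} {S : Finset ι} {D : Set (∀ i, β i)}

lemma DependsOn.restrict_preimage_image (hD : DependsOn (· ∈ D) S) :
    S.restrict ⁻¹' (S.restrict '' D) = D := by
  refine subset_antisymm ?_ (Set.subset_preimage_image _ _)
  rintro a ⟨a', ha', heq⟩
  exact (Iff.of_eq (hD fun i hi => congrFun heq ⟨i, hi⟩)).1 ha'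

lemma DependsOn.setOf_mem_eq_restrict {Ω : Type*} (hD : DependsOn (· ∈ D) S)
    (Z : ∀ i, Ω → β i) :
    {ω | (fun i => Z i ω) ∈ D} = {ω | S.restrict (fun i => Z i ω) ∈ S.restrict '' D} := by
  conv_lhs => rw [← hD.restrict_preimage_image]
  rfl

lemma IsLowerSet.image_restrict [DecidableEq ι] [∀ i, Preorder (β i)] (hD : IsLowerSet D) :
    IsLowerSet (S.restrict '' D) := by
  rintro _ b hb ⟨a, ha, rfl⟩
  refine ⟨Function.updateFinset a S b, hD (fun i => ?_) ha, Function.restrict_updateFinset a b⟩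
  simp only [Function.updateFinset]
  split_ifs with hi
  · exact hb ⟨i, hi⟩
  · exact le_rfl

end Restrict

namespace ProbabilityTheory

variable {Ω ι β : Type*} [MeasurableSpace Ω] {μ : Measure Ω} [MeasurableSpace β]
  [MeasurableSingletonClass β] [Countable β] {Y : ι → Ω → β}

theorem iIndepFun.measure_restrict_mem_eq_pi (hY : ∀ i, Measurable (Y i))
    (h : iIndepFun Y μ) (S : Finset ι) (A : Set (S → β)) :
    μ {ω | S.restrict (fun i => Y i ω) ∈ A} = Measure.pi (fun i : S => μ.map (Y i)) A := by
  have := h.isProbabilityMeasure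
  rw [← iIndepFun.map_fun_eq_pi_map (f := fun i : S => Y i) (fun i => (hY i).aemeasurable)
      (h.precomp Subtype.val_injective),
    Measure.map_apply (measurable_pi_lambda _ fun i : S => hY i) .of_discrete]
  rfl

theorem iIndepFun.measure_mem_eq_of_map_eq {Y' : ι → Ω → β}
    (hY : ∀ i, Measurable (Y i)) (hY' : ∀ i, Measurable (Y' i)) (h : iIndepFun Y μ)
    (h' : iIndepFun Y' μ) (hmap : ∀ i, μ.map (Y i) = μ.map (Y' i))
    {S : Finset ι} {D : Set (ι → β)} (hD : DependsOn (· ∈ D) S) :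
    μ {ω | (fun i => Y i ω) ∈ D} = μ {ω | (fun i => Y' i ω) ∈ D} := by
  simp only [hD.setOf_mem_eq_restrict, h.measure_restrict_mem_eq_pi hY,
    h'.measure_restrict_mem_eq_pi hY', hmap]

theorem iIndepFun.prod_measure_le_measure_biInter [DecidableEq ι] [LinearOrder β] [Fintype β]
    {κ : Type*} (hY : ∀ i, Measurable (Y i)) (h : iIndepFun Y μ) {S : Finset ι} (u : Finset κ)
    {D : κ → Set (ι → β)} (hD : ∀ j, IsLowerSet (D j)) (hDS : ∀ j, DependsOn (· ∈ D j) S) :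
    ∏ j ∈ u, μ {ω | (fun i => Y i ω) ∈ D j} ≤ μ {ω | (fun i => Y i ω) ∈ ⋂ j ∈ u, D j} := by
  have : ∀ i : S, IsProbabilityMeasure (μ.map (Y i)) :=
    fun i => have := h.isProbabilityMeasure; Measure.isProbabilityMeasure_map (hY i).aemeasurable
  have hmem (j : κ) := (hDS j).setOf_mem_eq_restrict Y
  have hinter : {ω | (fun i => Y i ω) ∈ ⋂ j ∈ u, D j}
      = {ω | S.restrict (fun i => Y i ω) ∈ ⋂ j ∈ u, S.restrict '' D j} := by
    ext ω
    simp only [Set.mem_iInter, Set.mem_ofPred_eq]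
    exact forall₂_congr fun j _ => Set.ext_iff.1 (hmem j) ω
  simp only [hmem, hinter, h.measure_restrict_mem_eq_pi hY]
  exact prod_measure_le_measure_biInter_of_isLowerSet _
    (fun a b => (Measure.pi_singleton_mul_pi_singleton _ a b).le) u
    fun j => (hD j).image_restrict

end ProbabilityTheory

section CompetitionModel

variable {d : ℕ}

def outsideBox (L : ℕ) : Set (Fin d → ℤ) := {k | ∃ i, (L : ℤ) ≤ |k i|}

def closedBox (R : ℤ) : Set (Fin d → ℤ) := {k | ∀ i, |k i| ≤ R}

def truncStep (L : ℕ) (c : CompStep d) (P : Set (Fin d → ℤ) × Set (Fin d → ℤ)) :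
    Set (Fin d → ℤ) × Set (Fin d → ℤ) :=
  let two := {k | c.o3 k = true ∨ ∃ i ∈ P.2, nbr i k ∧ c.o2 i k = true} ∪ outsideBox L
  ({k | k ∉ two ∧ ∃ i ∈ P.1, nbr i k ∧ c.o1 i k = true}, two)

lemma compEtaTrunc_zero (L : ℕ) (w : ℕ → CompStep d) (A B : Set (Fin d → ℤ)) :
    compEtaTrunc d L w A B 0 = (A \ outsideBox L, B ∪ outsideBox L) := rfl

lemma compEtaTrunc_succ (L : ℕ) (w : ℕ → CompStep d) (A B : Set (Fin d → ℤ)) (m : ℕ) :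
    compEtaTrunc d L w A B (m + 1) = truncStep L (w (m + 1)) (compEtaTrunc d L w A B m) := rfl

lemma compEtaTrunc_fst_subset_compl (L : ℕ) (w : ℕ → CompStep d) (A B : Set (Fin d → ℤ)) :
    ∀ m, (compEtaTrunc d L w A B m).1 ⊆ (outsideBox L)ᶜ
  | 0 => fun _ hk => hk.2
  | _ + 1 => fun _ hk hout => hk.1 (Or.inr hout)

lemma abs_le_of_nbr {x y : Fin d → ℤ} (h : nbr x y) (j : Fin d) : |x j - y j| ≤ 1 :=
  (Finset.single_le_sum (f := fun i => |x i - y i|) (fun _ _ => abs_nonneg _)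
    (Finset.mem_univ j)).trans h

lemma mem_closedBox_of_nbr {L : ℕ} {x k : Fin d → ℤ} (hk : k ∉ outsideBox L) (h : nbr x k) :
    x ∈ closedBox L := by
  intro j
  have hkj : |k j| < L := not_le.1 fun hj => hk ⟨j, hj⟩
  have := abs_le_of_nbr h j
  have := abs_sub_abs_le_abs_sub (x j) (k j)
  omega

lemma compl_outsideBox_subset_closedBox (L : ℕ) : (outsideBox L)ᶜ ⊆ closedBox (d := d) L :=
  fun _ hk j => (not_le.1 fun hj => hk ⟨j, hj⟩).le

def CompStep.EqOn (c c' : CompStep d) (K : Set (Fin d → ℤ)) : Prop :=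
  (∀ x ∈ K, ∀ y ∈ K, c.o1 x y = c'.o1 x y) ∧ (∀ x ∈ K, ∀ y ∈ K, c.o2 x y = c'.o2 x y) ∧
    ∀ x ∈ K, c.o3 x = c'.o3 x

lemma truncStep_congr {L : ℕ} {c c' : CompStep d} {P : Set (Fin d → ℤ) × Set (Fin d → ℤ)}
    (hP : P.1 ⊆ (outsideBox L)ᶜ) (hc : c.EqOn c' (closedBox L)) :
    truncStep L c P = truncStep L c' P := by
  obtain ⟨h1, h2, h3⟩ := hc
  have htwo : (truncStep L c P).2 = (truncStep L c' P).2 := by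
    ext k
    by_cases hk : k ∈ outsideBox L
    · simp [truncStep, hk]
    · have hkb := compl_outsideBox_subset_closedBox L hk
      simp only [truncStep, Set.mem_union, Set.mem_ofPred_eq, hk, or_false, h3 k hkb]
      refine or_congr_right (exists_congr fun i => and_congr_right fun _ =>
        and_congr_right fun hik => ?_)
      rw [h2 i (mem_closedBox_of_nbr hk hik) k hkb]
  refine Prod.ext ?_ htwo
  ext k
  simp only [truncStep] at htwo ⊢
  simp only [Set.mem_ofPred_eq, htwo]
  refine and_congr_right fun hk => exists_congr fun i =>
    and_congr_right fun hi => and_congr_right fun _ => ?_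
  have hk' : k ∉ outsideBox L := fun h => hk (Or.inr h)
  rw [h1 i (compl_outsideBox_subset_closedBox L (hP hi)) k
    (compl_outsideBox_subset_closedBox L hk')]

lemma compEtaTrunc_congr {L : ℕ} {w w' : ℕ → CompStep d} (A B : Set (Fin d → ℤ)) {t : ℕ}
    (hw : ∀ m ≤ t, (w m).EqOn (w' m) (closedBox L)) :
    compEtaTrunc d L w A B t = compEtaTrunc d L w' A B t := by
  induction t with
  | zero => rfl
  | succ t ih =>
    rw [compEtaTrunc_succ, compEtaTrunc_succ, ← ih fun m hm => hw m (by omega)]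
    exact truncStep_congr (compEtaTrunc_fst_subset_compl L w A B t) (hw _ le_rfl)

lemma truncStep_mono {L : ℕ} {c c' : CompStep d} {P P' : Set (Fin d → ℤ) × Set (Fin d → ℤ)}
    (h1 : c.o1 ≤ c'.o1) (h2 : c'.o2 ≤ c.o2) (h3 : c'.o3 ≤ c.o3) (hP1 : P.1 ⊆ P'.1)
    (hP2 : P'.2 ⊆ P.2) :
    (truncStep L c P).1 ⊆ (truncStep L c' P').1 ∧ (truncStep L c' P').2 ⊆ (truncStep L c P).2 := by
  have htwo : (truncStep L c' P').2 ⊆ (truncStep L c P).2 := by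
    rintro k ((hk | ⟨i, hi, hik, ho⟩) | hk)
    · exact Or.inl (Or.inl (Bool.le_iff_imp.1 (h3 k) hk))
    · exact Or.inl (Or.inr ⟨i, hP2 hi, hik, Bool.le_iff_imp.1 (h2 i k) ho⟩)
    · exact Or.inr hk
  refine ⟨?_, htwo⟩
  rintro k ⟨hk, i, hi, hik, ho⟩
  exact ⟨fun h => hk (htwo h), i, hP1 hi, hik, Bool.le_iff_imp.1 (h1 i k) ho⟩

lemma compEtaTrunc_mono {L : ℕ} {w w' : ℕ → CompStep d} (A B : Set (Fin d → ℤ))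
    (h1 : ∀ m, (w m).o1 ≤ (w' m).o1) (h2 : ∀ m, (w' m).o2 ≤ (w m).o2)
    (h3 : ∀ m, (w' m).o3 ≤ (w m).o3) :
    ∀ t, (compEtaTrunc d L w A B t).1 ⊆ (compEtaTrunc d L w' A B t).1 ∧
      (compEtaTrunc d L w' A B t).2 ⊆ (compEtaTrunc d L w A B t).2
  | 0 => ⟨subset_rfl, subset_rfl⟩
  | t + 1 => truncStep_mono (h1 _) (h2 _) (h3 _) (compEtaTrunc_mono A B h1 h2 h3 t).1
      (compEtaTrunc_mono A B h1 h2 h3 t).2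

def CompStep.comap (c : CompStep d) (f : (Fin d → ℤ) → (Fin d → ℤ)) : CompStep d :=
  ⟨fun x y => c.o1 (f x) (f y), fun x y => c.o2 (f x) (f y), fun x => c.o3 (f x)⟩

lemma truncStep_comap {L : ℕ} (c : CompStep d) (P : Set (Fin d → ℤ) × Set (Fin d → ℤ))
    {f : Equiv.Perm (Fin d → ℤ)} (hnbr : ∀ x y, nbr (f x) (f y) ↔ nbr x y)
    (hout : f ⁻¹' outsideBox L = outsideBox L) :
    truncStep L (c.comap f) (Prod.map (f ⁻¹' ·) (f ⁻¹' ·) P)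
      = Prod.map (f ⁻¹' ·) (f ⁻¹' ·) (truncStep L c P) := by
  have hout' (k : Fin d → ℤ) : f k ∈ outsideBox L ↔ k ∈ outsideBox L := Set.ext_iff.1 hout k
  have htwo : (truncStep L (c.comap f) (Prod.map (f ⁻¹' ·) (f ⁻¹' ·) P)).2
      = f ⁻¹' (truncStep L c P).2 := by
    ext k
    simp only [truncStep, CompStep.comap, Prod.map, Set.mem_union, Set.mem_ofPred_eq,
      Set.mem_preimage, hout']
    refine or_congr_left (or_congr_right (f.exists_congr fun i => ?_))
    rw [hnbr]
  refine Prod.ext ?_ htwo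
  ext k
  exact and_congr (not_congr (Set.ext_iff.1 htwo k))
    (f.exists_congr fun i => and_congr_right' (and_congr_left' (hnbr i k).symm))

lemma compEtaTrunc_comap {L : ℕ} (w : ℕ → CompStep d) {A B : Set (Fin d → ℤ)}
    {f : Equiv.Perm (Fin d → ℤ)} (hnbr : ∀ x y, nbr (f x) (f y) ↔ nbr x y)
    (hout : f ⁻¹' outsideBox L = outsideBox L) (hA : f ⁻¹' A = A) (hB : f ⁻¹' B = B) :
    ∀ t, compEtaTrunc d L (fun m => (w m).comap f) A B t
      = Prod.map (f ⁻¹' ·) (f ⁻¹' ·) (compEtaTrunc d L w A B t)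
  | 0 => by simp only [compEtaTrunc_zero, Prod.map, Set.preimage_sdiff, Set.preimage_union, hA, hB,
      hout]
  | t + 1 => by
    rw [compEtaTrunc_succ, compEtaTrunc_succ, compEtaTrunc_comap w hnbr hout hA hB t,
      truncStep_comap _ _ hnbr hout]

def signFlip (s : Fin d → Bool) : Equiv.Perm (Fin d → ℤ) :=
  Function.Involutive.toPerm (fun k i => if s i then -k i else k i) fun k => by
    funext i
    by_cases h : s i <;> simp [h]

lemma signFlip_apply (s : Fin d → Bool) (k : Fin d → ℤ) (i : Fin d) :
    signFlip s k i = if s i then -k i else k i := rfl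

lemma signFlip_signFlip (s : Fin d → Bool) (k : Fin d → ℤ) : signFlip s (signFlip s k) = k :=
  Function.Involutive.toPerm_involutive _ k

lemma coe_signFlip_false : ⇑(signFlip (fun _ : Fin d => false)) = id := by
  funext k i
  simp [signFlip_apply]

lemma abs_signFlip_apply (s : Fin d → Bool) (k : Fin d → ℤ) (i : Fin d) :
    |signFlip s k i| = |k i| := by
  rw [signFlip_apply]
  split_ifs <;> simp

lemma nbr_signFlip (s : Fin d → Bool) (x y : Fin d → ℤ) :
    nbr (signFlip s x) (signFlip s y) ↔ nbr x y := by
  have (i : Fin d) : |signFlip s x i - signFlip s y i| = |x i - y i| := by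
    simp only [signFlip_apply]
    split_ifs
    · rw [neg_sub_neg, abs_sub_comm]
    · rfl
  simp only [nbr, this]

lemma signFlip_preimage {s : Fin d → Bool} {A : Set (Fin d → ℤ)}
    (hA : ∀ k k', (∀ i, |k i| = |k' i|) → (k ∈ A ↔ k' ∈ A)) : signFlip s ⁻¹' A = A :=
  Set.ext fun k => hA _ _ (abs_signFlip_apply s k)

def CompIdx.mapSites (f : Equiv.Perm (Fin d → ℤ)) : Equiv.Perm (CompIdx d) :=
  let edges := (Equiv.refl ℕ).prodCongr (f.prodCongr f)
  edges.sumCongr (edges.sumCongr ((Equiv.refl ℕ).prodCongr f))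

/-- The type-2 bits are stored negated, so that the process is monotone in every bit. -/
def envOfBits (a : CompIdx d → Bool) : ℕ → CompStep d := fun m =>
  ⟨fun x y => a (.inl (m, x, y)), fun x y => !a (.inr (.inl (m, x, y))),
    fun x => !a (.inr (.inr (m, x)))⟩

lemma envOfBits_comp_mapSites (a : CompIdx d → Bool) (f : Equiv.Perm (Fin d → ℤ)) :
    envOfBits (a ∘ CompIdx.mapSites f) = fun m => (envOfBits a m).comap f := rfl

lemma monotone_compEtaTrunc_envOfBits (L : ℕ) (A B : Set (Fin d → ℤ)) (t : ℕ) :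
    Monotone fun a => (compEtaTrunc d L (envOfBits a) A B t).1 := fun _ _ h =>
  (compEtaTrunc_mono A B (fun _ _ _ => h _) (fun _ _ _ => compl_le_compl (h _))
    (fun _ _ => compl_le_compl (h _)) t).1

noncomputable def localIdx (d t L : ℕ) : Finset (CompIdx d) :=
  let T := Finset.range (t + 1)
  let K := Fintype.piFinset fun _ : Fin d => Finset.Icc (-(L : ℤ)) L
  (T ×ˢ K ×ˢ K).disjSum ((T ×ˢ K ×ˢ K).disjSum (T ×ˢ K))

lemma dependsOn_compEtaTrunc_envOfBits (L : ℕ) (A B : Set (Fin d → ℤ)) (t : ℕ) :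
    DependsOn (fun a => compEtaTrunc d L (envOfBits a) A B t) (localIdx d t L) := by
  intro a a' h
  refine compEtaTrunc_congr A B fun m hm => ?_
  have hK {x : Fin d → ℤ} (hx : x ∈ closedBox L) :
      x ∈ Fintype.piFinset fun _ : Fin d => Finset.Icc (-(L : ℤ)) L := by
    simp only [closedBox, Set.mem_ofPred_eq] at hx
    simpa [Fintype.mem_piFinset, ← abs_le] using hx
  have hT : m ∈ Finset.range (t + 1) := Finset.mem_range.2 (Nat.lt_succ_of_le hm)
  refine ⟨fun x hx y hy => h _ ?_, fun x hx y hy => congrArg (!·) (h _ ?_),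
    fun x hx => congrArg (!·) (h _ ?_)⟩
  · simp [localIdx, hT, hK hx, hK hy]
  · simp [localIdx, hT, hK hx, hK hy]
  · simp [localIdx, hT, hK hx]

def orthant (L : ℕ) : Set (Fin d → ℤ) := {k | ∀ i, 0 ≤ k i ∧ k i < (L : ℤ)}

lemma compl_outsideBox_subset_iUnion_orthant (L : ℕ) :
    (outsideBox L)ᶜ ⊆ ⋃ s : Fin d → Bool, signFlip s ⁻¹' orthant L := by
  intro k hk
  refine Set.mem_iUnion.2 ⟨fun i => decide (k i < 0), fun i => ?_⟩
  have hki := abs_lt.1 (not_le.1 fun h => hk ⟨i, h⟩)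
  rw [signFlip_apply]
  split_ifs with h <;> simp at h <;> constructor <;> omega

lemma encard_le_of_encard_inter_orthant_le {L N : ℕ} {T : Set (Fin d → ℤ)}
    (hT : T ⊆ (outsideBox L)ᶜ) (hN : ∀ s, (T ∩ signFlip s ⁻¹' orthant L).encard ≤ N) :
    T.encard ≤ (N * 2 ^ d : ℕ) := by
  have hcover : T ⊆ ⋃ s ∈ Finset.univ, T ∩ signFlip s ⁻¹' orthant L := by
    intro k hk
    obtain ⟨s, hs⟩ := Set.mem_iUnion.1 (compl_outsideBox_subset_iUnion_orthant L (hT hk))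
    exact Set.mem_biUnion (Finset.mem_univ s) ⟨hk, hs⟩
  calc T.encard ≤ ∑ s, (T ∩ signFlip s ⁻¹' orthant L).encard :=
        (Set.encard_le_encard hcover).trans (Finset.set_encard_biUnion_le _ _)
    _ ≤ ∑ _s : Fin d → Bool, (N : ℕ∞) := Finset.sum_le_sum fun s _ => hN s
    _ = (N * 2 ^ d : ℕ) := by simp [mul_comm]

end CompetitionModel

section DrivingBits

variable {Ω : Type*} {d : ℕ}

lemma measurable_compVar [MeasurableSpace Ω] {env : Ω → ℕ → CompStep d}
    (henv : ∀ n, Measurable fun ω => env ω n) (i : CompIdx d) : Measurable (compVar env i) := by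
  have hc (n : ℕ) := (comap_measurable fun c : CompStep d => (c.o1, c.o2, c.o3)).comp (henv n)
  rcases i with ⟨n, x, y⟩ | ⟨n, x, y⟩ | ⟨n, x⟩
  · exact (measurable_pi_apply y).comp ((measurable_pi_apply x).comp (hc n).fst)
  · exact (measurable_pi_apply y).comp ((measurable_pi_apply x).comp (hc n).snd.fst)
  · exact (measurable_pi_apply x).comp (hc n).snd.snd

lemma CompLaw.map_compVar_mapSites [MeasurableSpace Ω] {μ : Measure Ω}
    {env : Ω → ℕ → CompStep d} {p q α : ℝ} (hlaw : CompLaw μ env p q α)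
    (henv : ∀ n, Measurable fun ω => env ω n) (f : Equiv.Perm (Fin d → ℤ)) (i : CompIdx d) :
    μ.map (compVar env (CompIdx.mapSites f i)) = μ.map (compVar env i) := by
  have := hlaw.1.isProbabilityMeasure
  have := Measure.isProbabilityMeasure_map (μ := μ) (measurable_compVar henv i).aemeasurable
  have := Measure.isProbabilityMeasure_map (μ := μ)
    (measurable_compVar henv (CompIdx.mapSites f i)).aemeasurable
  refine Measure.ext_of_apply_true ?_
  obtain ⟨-, h1, h2, h3⟩ := hlaw
  rw [Measure.map_apply (measurable_compVar henv _) (measurableSet_singleton _),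
    Measure.map_apply (measurable_compVar henv _) (measurableSet_singleton _)]
  rcases i with ⟨n, x, y⟩ | ⟨n, x, y⟩ | ⟨n, x⟩
  · exact (h1 n (f x) (f y)).trans (h1 n x y).symm
  · exact (h2 n (f x) (f y)).trans (h2 n x y).symm
  · exact (h3 n (f x)).trans (h3 n x).symm

def compBits (env : Ω → ℕ → CompStep d) (i : CompIdx d) (ω : Ω) : Bool :=
  xor (compVar env i ω) i.isRight

lemma envOfBits_compBits (env : Ω → ℕ → CompStep d) (ω : Ω) :
    envOfBits (fun i => compBits env i ω) = env ω := by
  funext m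
  simp [envOfBits, compBits, compVar]

lemma measurable_compBits [MeasurableSpace Ω] {env : Ω → ℕ → CompStep d}
    (henv : ∀ n, Measurable fun ω => env ω n) (i : CompIdx d) : Measurable (compBits env i) :=
  (measurable_from_top (f := fun b : Bool => xor b i.isRight)).comp (measurable_compVar henv i)

lemma CompLaw.iIndepFun_compBits [MeasurableSpace Ω] {μ : Measure Ω}
    {env : Ω → ℕ → CompStep d} {p q α : ℝ} (hlaw : CompLaw μ env p q α) :
    iIndepFun (compBits env) μ :=
  hlaw.1.comp (fun i b => xor b i.isRight) fun _ => measurable_from_top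

lemma CompLaw.map_compBits_mapSites [MeasurableSpace Ω] {μ : Measure Ω}
    {env : Ω → ℕ → CompStep d} {p q α : ℝ} (hlaw : CompLaw μ env p q α)
    (henv : ∀ n, Measurable fun ω => env ω n) (f : Equiv.Perm (Fin d → ℤ)) (i : CompIdx d) :
    μ.map (compBits env (CompIdx.mapSites f i)) = μ.map (compBits env i) := by
  have hmap (j : CompIdx d) :
      μ.map (compBits env j) = (μ.map (compVar env j)).map (xor · j.isRight) :=
    (Measure.map_map (g := (xor · j.isRight)) measurable_from_top (measurable_compVar henv j)).symm
  have hright : (CompIdx.mapSites f i).isRight = i.isRight := by rcases i with _ | _ <;> rfl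
  rw [hmap, hmap, hright, hlaw.map_compVar_mapSites henv]

end DrivingBits

section OrthantEvent

variable {d : ℕ}

def cube (n : ℕ) : Set (Fin d → ℤ) := {k | ∀ i, |k i| ≤ (n : ℤ)}

def orthantEvent (n L t N : ℕ) (s : Fin d → Bool) : Set (CompIdx d → Bool) :=
  {a | ((compEtaTrunc d L (envOfBits a) (cube n) (cube n)ᶜ t).1 ∩ signFlip s ⁻¹' orthant L).encard
    ≤ N}

variable {n L t N : ℕ}

lemma isLowerSet_orthantEvent (s : Fin d → Bool) : IsLowerSet (orthantEvent n L t N s) :=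
  fun _ _ h ha => (Set.encard_mono (Set.inter_subset_inter_left _
    (monotone_compEtaTrunc_envOfBits L _ _ t h))).trans ha

lemma dependsOn_orthantEvent (s : Fin d → Bool) :
    DependsOn (· ∈ orthantEvent n L t N s) (localIdx d t L) := fun _ _ h => by
  simp only [orthantEvent, Set.mem_ofPred_eq, dependsOn_compEtaTrunc_envOfBits L _ _ t h]

lemma comp_mapSites_mem_orthantEvent_iff (s : Fin d → Bool) (a : CompIdx d → Bool) :
    a ∘ CompIdx.mapSites (signFlip s) ∈ orthantEvent n L t N (fun _ => false)
      ↔ a ∈ orthantEvent n L t N s := by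
  have hcube : signFlip s ⁻¹' cube n = cube n :=
    signFlip_preimage fun k k' h => by simp [cube, h]
  have hout : signFlip s ⁻¹' outsideBox L = outsideBox L :=
    signFlip_preimage fun k k' h => by simp [outsideBox, h]
  have horthant : signFlip s ⁻¹' (signFlip s ⁻¹' orthant L) = orthant L := by
    ext k
    simp [signFlip_signFlip]
  simp only [orthantEvent, Set.mem_ofPred_eq, envOfBits_comp_mapSites,
    compEtaTrunc_comap _ (nbr_signFlip s) hout hcube (by rw [Set.preimage_compl, hcube]),
    Prod.map, coe_signFlip_false, Set.preimage_id]
  rw [← horthant, ← Set.preimage_inter, Set.encard_preimage_of_bijective (signFlip s).bijective,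
    horthant]

lemma biInter_orthantEvent_subset :
    ⋂ s ∈ Finset.univ, orthantEvent n L t N s ⊆
      {a | (compEtaTrunc d L (envOfBits a) (cube n) (cube n)ᶜ t).1.encard ≤ (N * 2 ^ d : ℕ)} :=
  fun _ ha => encard_le_of_encard_inter_orthant_le (compEtaTrunc_fst_subset_compl L _ _ _ t)
    fun s => Set.mem_iInter₂.1 ha s (Finset.mem_univ s)

lemma CompLaw.measure_orthantEvent_eq {Ω : Type*} [MeasurableSpace Ω] {μ : Measure Ω}
    {env : Ω → ℕ → CompStep d} {p q α : ℝ} (hlaw : CompLaw μ env p q α)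
    (henv : ∀ n, Measurable fun ω => env ω n) (s : Fin d → Bool) :
    μ {ω | (compBits env · ω) ∈ orthantEvent n L t N s}
      = μ {ω | (compBits env · ω) ∈ orthantEvent n L t N fun _ => false} := by
  let σ := CompIdx.mapSites (signFlip s)
  have hY := measurable_compBits henv
  have hind := hlaw.iIndepFun_compBits
  calc _ = μ {ω | (fun i => compBits env (σ i) ω) ∈ orthantEvent n L t N fun _ => false} := by
        simp only [← comp_mapSites_mem_orthantEvent_iff s]
        rfl
    _ = _ := iIndepFun.measure_mem_eq_of_map_eq (fun i => hY (σ i)) hY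
        (hind.precomp σ.injective) hind (hlaw.map_compBits_mapSites henv _)
        (dependsOn_orthantEvent _)

end OrthantEvent

theorem stmt15_general {Ω : Type*} [MeasurableSpace Ω] (μ : Measure Ω)
    (d : ℕ) (env : Ω → ℕ → CompStep d)
    (henv : ∀ n, Measurable (fun ω => env ω n))
    (p q α : ℝ)
    (hlaw : CompLaw μ env p q α)
    (n N t L : ℕ) :
    μ {ω | ((compEtaTrunc d L (env ω)
          {k : Fin d → ℤ | ∀ i, |k i| ≤ (n : ℤ)}
          {k : Fin d → ℤ | ¬ ∀ i, |k i| ≤ (n : ℤ)} t).1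
          ∩ {k : Fin d → ℤ | ∀ i, 0 ≤ k i ∧ k i < (L : ℤ)}).encard ≤ (N : ℕ∞)}
        ^ (2 ^ d)
      ≤ μ {ω | ((compEtaTrunc d L (env ω)
          {k : Fin d → ℤ | ∀ i, |k i| ≤ (n : ℤ)}
          {k : Fin d → ℤ | ¬ ∀ i, |k i| ≤ (n : ℤ)} t).1).encard ≤ ((N * 2 ^ d : ℕ) : ℕ∞)} := by
  classical
  calc _ = ∏ s : Fin d → Bool, μ {ω | (compBits env · ω) ∈ orthantEvent n L t N s} := by
        simp only [hlaw.measure_orthantEvent_eq henv, Finset.prod_const, Finset.card_univ,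
          Fintype.card_fun, Fintype.card_bool, Fintype.card_fin]
        simp only [orthantEvent, Set.mem_ofPred_eq, envOfBits_compBits, coe_signFlip_false,
          Set.preimage_id]
        rfl
    _ ≤ μ {ω | (compBits env · ω) ∈ ⋂ s ∈ Finset.univ, orthantEvent n L t N s} :=
        hlaw.iIndepFun_compBits.prod_measure_le_measure_biInter (measurable_compBits henv)
          Finset.univ isLowerSet_orthantEvent dependsOn_orthantEvent
    _ ≤ _ := measure_mono fun ω hω => by
        have h := biInter_orthantEvent_subset hω
        rw [Set.mem_ofPred_eq, envOfBits_compBits] at h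
        exact h

/-- Orthant square-root trick: for the truncated competition process started from the full
cube `[-n,n]^d` of 1's, for all positive `n, N, t` and `L ≥ n`,
`P(|_Lη₁ᵗ ∩ [0,L)^d| ≤ N)^{2^d} ≤ P(|_Lη₁ᵗ| ≤ N·2^d)`. -/
theorem stmt15 {Ω : Type*} [MeasurableSpace Ω] (μ : Measure Ω) [IsProbabilityMeasure μ]
    (d : ℕ) (hd : 1 ≤ d) (env : Ω → ℕ → CompStep d)
    (henv : ∀ n, Measurable (fun ω => env ω n))
    (p q α : ℝ) (hp0 : 0 < p) (hp1 : p < 1) (hq0 : 0 ≤ q) (hq1 : q ≤ 1)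
    (hα0 : 0 ≤ α) (hα1 : α ≤ 1)
    (hlaw : CompLaw μ env p q α)
    (n N t L : ℕ) (hn : 1 ≤ n) (hN : 1 ≤ N) (ht : 1 ≤ t) (hL : n ≤ L) :
    μ {ω | ((compEtaTrunc d L (env ω)
          {k : Fin d → ℤ | ∀ i, |k i| ≤ (n : ℤ)}
          {k : Fin d → ℤ | ¬ ∀ i, |k i| ≤ (n : ℤ)} t).1
          ∩ {k : Fin d → ℤ | ∀ i, 0 ≤ k i ∧ k i < (L : ℤ)}).encard ≤ (N : ℕ∞)}
        ^ (2 ^ d)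
      ≤ μ {ω | ((compEtaTrunc d L (env ω)
          {k : Fin d → ℤ | ∀ i, |k i| ≤ (n : ℤ)}
          {k : Fin d → ℤ | ¬ ∀ i, |k i| ≤ (n : ℤ)} t).1).encard ≤ ((N * 2 ^ d : ℕ) : ℕ∞)} :=
  stmt15_general μ d env henv p q α hlaw n N t L
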